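/- arXiv:1206.4784 — 2 statements merged into one kernel-verified Lean document; each statement's English description precedes it below -/
import Mathlib

section
/- Let v be a smooth vector field on ℝⁿ and S = {x | F(x) = 0} a level set of a smooth function F : ℝⁿ → ℝ whose gradient is nonvanishing on S. If the Lie derivative of F along v vanishes at every point of S, then the flow of v preserves S: for every x ∈ S and every time t in the domain of the flow, the flow of v starting at x stays in S. -/
open Set

/-- Infinitesimal criterion for invariance of a level set: if `v` is a smooth vector
field on `ℝⁿ`, `F` is smooth with nonvanishing gradient on `S = F⁻¹(0)`, and the Lie
derivative `dF(x)(v(x))` vanishes on `S`, then every integral curve of `v` starting in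
`S` stays in `S`. -/
theorem flow_preserves_level_set
    (n : ℕ) (v : EuclideanSpace ℝ (Fin n) → EuclideanSpace ℝ (Fin n))
    (F : EuclideanSpace ℝ (Fin n) → ℝ)
    (hv : ContDiff ℝ (⊤ : ℕ∞) v) (hF : ContDiff ℝ (⊤ : ℕ∞) F)
    (S : Set (EuclideanSpace ℝ (Fin n))) (hS : S = {x | F x = 0})
    (hgrad : ∀ x ∈ S, fderiv ℝ F x ≠ 0)
    (hLie : ∀ x ∈ S, fderiv ℝ F x (v x) = 0)
    (γ : ℝ → EuclideanSpace ℝ (Fin n))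
    (hγ : ∀ t, HasDerivAt γ (v (γ t)) t)
    (h0 : γ 0 ∈ S) :
    ∀ t, γ t ∈ S := by
  subst hS
  -- the "gradient" vector field
  set g : EuclideanSpace ℝ (Fin n) → EuclideanSpace ℝ (Fin n) := fun x => (InnerProductSpace.toDual ℝ (EuclideanSpace ℝ (Fin n))).symm (fderiv ℝ F x) with hgdef
  have hginner : ∀ x (y : EuclideanSpace ℝ (Fin n)), (inner ℝ (g x) y : ℝ) = fderiv ℝ F x y := fun x y =>
    InnerProductSpace.toDual_symm_apply
  have hgself : ∀ x, fderiv ℝ F x (g x) = ‖g x‖ ^ 2 := fun x => by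
    rw [← hginner, real_inner_self_eq_norm_sq]
  have hgzero : ∀ x, g x = 0 ↔ fderiv ℝ F x = 0 := fun x => by
    simp [hgdef, LinearIsometryEquiv.map_eq_zero_iff]
  -- smoothness facts
  have hFd : Differentiable ℝ F := hF.differentiable (by simp)
  have hfd : ContDiff ℝ (⊤ : ℕ∞) (fderiv ℝ F) := hF.fderiv_right (by exact (by simp))
  have hg : ContDiff ℝ (⊤ : ℕ∞) g := (InnerProductSpace.toDual ℝ (EuclideanSpace ℝ (Fin n))).symm.contDiff.comp hfd
  have hGv : ContDiff ℝ (⊤ : ℕ∞) (fun x => fderiv ℝ F x (v x)) := hfd.clm_apply hv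
  have hgn : ContDiff ℝ (⊤ : ℕ∞) (fun x => ‖g x‖ ^ 2) := hg.norm_sq ℝ
  -- the tangential modification of v
  set w : EuclideanSpace ℝ (Fin n) → EuclideanSpace ℝ (Fin n) := fun x => v x - (fderiv ℝ F x (v x) / ‖g x‖ ^ 2) • g x with hwdef
  have hγcont : Continuous γ :=
    continuous_iff_continuousAt.2 fun t => (hγ t).continuousAt
  -- the set of times in S is closed
  have hclosed : IsClosed {t : ℝ | F (γ t) = 0} :=
    isClosed_eq (hF.continuous.comp hγcont) continuous_const
  -- openness
  have hopen : IsOpen {t : ℝ | F (γ t) = 0} := by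
    rw [isOpen_iff_mem_nhds]
    intro t₀ ht₀
    have ht₀' : F (γ t₀) = 0 := ht₀
    set x₀ := γ t₀ with hx₀
    have hx₀S : x₀ ∈ {x | F x = 0} := ht₀'
    have hgx₀ : g x₀ ≠ 0 := fun h => hgrad x₀ hx₀S ((hgzero x₀).1 h)
    have hnx₀ : ‖g x₀‖ ^ 2 ≠ 0 := pow_ne_zero _ (norm_ne_zero_iff.2 hgx₀)
    -- w is C¹ at x₀
    have hw1 : ContDiffAt ℝ 1 w x₀ := by
      refine ((hv.of_le (by simp)).contDiffAt).sub ?_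
      exact (((hGv.of_le (by simp)).contDiffAt.div (hgn.of_le (by simp)).contDiffAt hnx₀).smul
        (hg.of_le (by simp)).contDiffAt)
    -- local solution of the modified ODE
    obtain ⟨δ, hδ0, ε, hε, hδ⟩ := hw1.exists_forall_mem_closedBall_exists_eq_forall_mem_Ioo_hasDerivAt₀ t₀
    -- shrink so that δ stays in the region where g ≠ 0
    have hδct₀ : ContinuousAt δ t₀ :=
      (hδ t₀ ⟨by linarith, by linarith⟩).continuousAt
    have hUopen : IsOpen {x : EuclideanSpace ℝ (Fin n) | g x ≠ 0} :=
      isOpen_compl_iff.2 (isClosed_singleton.preimage hg.continuous)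
    have hmem : ∀ᶠ t in nhds t₀, g (δ t) ≠ 0 := by
      have : {x : EuclideanSpace ℝ (Fin n) | g x ≠ 0} ∈ nhds x₀ := hUopen.mem_nhds hgx₀
      exact hδct₀ (hδ0 ▸ this)
    obtain ⟨ε₁, hε₁, hball⟩ := Metric.eventually_nhds_iff_ball.mp hmem
    set ε₂ := min ε ε₁ with hε₂def
    have hε₂ : 0 < ε₂ := lt_min hε hε₁
    set I := Ioo (t₀ - ε₂) (t₀ + ε₂) with hIdef
    have hII : I ⊆ Ioo (t₀ - ε) (t₀ + ε) := by
      intro t ht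
      have hle := min_le_left ε ε₁
      exact ⟨by linarith [ht.1], by linarith [ht.2]⟩
    have hIg : ∀ t ∈ I, g (δ t) ≠ 0 := by
      intro t ht
      apply hball
      rw [Real.ball_eq_Ioo]
      exact ⟨by linarith [ht.1, min_le_right ε ε₁], by linarith [ht.2, min_le_right ε ε₁]⟩
    have ht₀I : t₀ ∈ I := ⟨by linarith, by linarith⟩
    -- F ∘ δ has zero derivative on I
    have hFδ : ∀ t ∈ I, HasDerivAt (fun t => F (δ t)) 0 t := by
      intro t ht
      have hd : HasDerivAt δ (w (δ t)) t := hδ t (hII ht)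
      have := (hFd (δ t)).hasFDerivAt.comp_hasDerivAt t hd
      convert this using 1
      · rfl
      · rfl
      · rfl
      have hne : ‖g (δ t)‖ ^ 2 ≠ 0 := pow_ne_zero _ (norm_ne_zero_iff.2 (hIg t ht))
      simp only [hwdef, map_sub, map_smul, hgself, smul_eq_mul]
      field_simp
      rw [div_self (norm_ne_zero_iff.2 (hIg t ht)), sub_self, mul_zero]
    -- hence F ∘ δ is constant on I
    have hconst : ∀ t ∈ I, F (δ t) = 0 := by
      intro t ht
      have hIconv : Convex ℝ I := convex_Ioo _ _
      have hIopen : IsOpen I := isOpen_Ioo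
      have hdiff : DifferentiableOn ℝ (fun t => F (δ t)) I := fun s hs =>
        ((hFδ s hs).differentiableAt).differentiableWithinAt
      have hzero : ∀ s ∈ I, fderivWithin ℝ (fun t => F (δ t)) I s = 0 := by
        intro s hs
        rw [fderivWithin_of_isOpen hIopen hs, (hFδ s hs).hasFDerivAt.fderiv]
        ext
        simp
      have := hIconv.is_const_of_fderivWithin_eq_zero hdiff hzero ht ht₀I
      rw [this, hδ0]
      exact ht₀'
    -- so δ t ∈ S on I, hence w (δ t) = v (δ t)
    have hδv : ∀ t ∈ I, HasDerivAt δ (v (δ t)) t := by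
      intro t ht
      have hd : HasDerivAt δ (w (δ t)) t := hδ t (hII ht)
      have hSmem : δ t ∈ {x | F x = 0} := hconst t ht
      have : w (δ t) = v (δ t) := by
        simp [hwdef, hLie _ hSmem]
      rwa [this] at hd
    -- uniqueness: γ = δ near t₀
    obtain ⟨K, s, hs, hlip⟩ := (hv.of_le (by simp)).contDiffAt.exists_lipschitzOnWith (x := x₀)
    have hγs : ∀ᶠ t in nhds t₀, HasDerivAt γ (v (γ t)) t ∧ γ t ∈ s := by
      filter_upwards [hγcont.continuousAt (hx₀ ▸ hs)] with t ht
      exact ⟨hγ t, ht⟩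
    have hδs : ∀ᶠ t in nhds t₀, HasDerivAt δ (v (δ t)) t ∧ δ t ∈ s := by
      have h1 : ∀ᶠ t in nhds t₀, t ∈ I := isOpen_Ioo.mem_nhds ht₀I
      have h2 : ∀ᶠ t in nhds t₀, δ t ∈ s := hδct₀ (hδ0 ▸ hs)
      filter_upwards [h1, h2] with t ht1 ht2
      exact ⟨hδv t ht1, ht2⟩
    have heq : γ =ᶠ[nhds t₀] δ :=
      ODE_solution_unique_of_eventually (v := fun _ x => v x) (s := fun _ => s)
        (Filter.Eventually.of_forall fun _ => hlip) hγs hδs (hδ0.symm)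
    -- conclude F (γ t) = 0 near t₀
    have h1 : ∀ᶠ t in nhds t₀, t ∈ I := isOpen_Ioo.mem_nhds ht₀I
    filter_upwards [heq, h1] with t ht ht1
    show F (γ t) = 0
    rw [ht]
    exact hconst t ht1
  have hne : ({t : ℝ | F (γ t) = 0}).Nonempty := ⟨0, h0⟩
  have := IsClopen.eq_univ ⟨hclosed, hopen⟩ hne
  intro t
  show F (γ t) = 0
  have : t ∈ {t : ℝ | F (γ t) = 0} := this ▸ mem_univ t
  exact this
end

section
/- The PVTOL system ÿ¹ = -u¹ sin θ + ε u² cos θ, ÿ² = u¹ cos θ + ε u² sin θ + g, θ̈ = u² is mapped by the transformation z¹ = y¹ - ε sin θ, z² = y² + ε cos θ, v¹ = θ, v² = u¹ - ε θ̇² to the system z̈¹ = -v² sin v¹, z̈² = v² cos v¹ + g: if (y¹, y², θ) solves the PVTOL equations with inputs (u¹, u²), then (z¹, z²) as defined solves the second system with inputs (v¹, v²) as defined. -/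
open Real

/-! The point `z = y + ε (-sin θ, cos θ)` is the centre of oscillation of the aircraft. Its
acceleration is that of `y` plus the centripetal and tangential terms `-ε θ̇² (-sin θ, cos θ)` and
`ε θ̈ (-cos θ, -sin θ)`; since `θ̈ = u²`, the tangential term cancels the `ε u²` contribution to
`ÿ`, and the centripetal one is absorbed in the new input `v² = u¹ - ε θ̇²`. -/

section SecondDerivative

variable {f g : ℝ → ℝ}

theorem deriv_deriv_add_const_mul (c : ℝ) (hf : Differentiable ℝ f)
    (hf' : Differentiable ℝ (deriv f)) (hg : Differentiable ℝ g) (hg' : Differentiable ℝ (deriv g))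
    (t : ℝ) :
    deriv (deriv fun s => f s + c * g s) t = deriv (deriv f) t + c * deriv (deriv g) t := by
  have hderiv : deriv (fun s => f s + c * g s) = fun s => deriv f s + c * deriv g s := by
    funext s
    exact ((hf s).hasDerivAt.add ((hg s).hasDerivAt.const_mul c)).deriv
  rw [hderiv]
  exact ((hf' t).hasDerivAt.add ((hg' t).hasDerivAt.const_mul c)).deriv

theorem deriv_deriv_sub_const_mul (c : ℝ) (hf : Differentiable ℝ f)
    (hf' : Differentiable ℝ (deriv f)) (hg : Differentiable ℝ g) (hg' : Differentiable ℝ (deriv g))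
    (t : ℝ) :
    deriv (deriv fun s => f s - c * g s) t = deriv (deriv f) t - c * deriv (deriv g) t := by
  simpa only [neg_mul, ← sub_eq_add_neg] using deriv_deriv_add_const_mul (-c) hf hf' hg hg' t

end SecondDerivative

section Trigonometric

variable {θ : ℝ → ℝ}

theorem deriv_sin_comp (hθ : Differentiable ℝ θ) :
    deriv (fun t => sin (θ t)) = fun t => cos (θ t) * deriv θ t :=
  funext fun t => _root_.deriv_sin (hθ t)

theorem deriv_cos_comp (hθ : Differentiable ℝ θ) :
    deriv (fun t => cos (θ t)) = fun t => -sin (θ t) * deriv θ t :=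
  funext fun t => _root_.deriv_cos (hθ t)

theorem differentiable_deriv_sin_comp (hθ : Differentiable ℝ θ)
    (hθ' : Differentiable ℝ (deriv θ)) : Differentiable ℝ (deriv fun t => sin (θ t)) := by
  rw [deriv_sin_comp hθ]
  exact hθ.cos.mul hθ'

theorem differentiable_deriv_cos_comp (hθ : Differentiable ℝ θ)
    (hθ' : Differentiable ℝ (deriv θ)) : Differentiable ℝ (deriv fun t => cos (θ t)) := by
  rw [deriv_cos_comp hθ]
  exact hθ.sin.neg.mul hθ'

theorem deriv_deriv_sin_comp (hθ : Differentiable ℝ θ) (hθ' : Differentiable ℝ (deriv θ))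
    (t : ℝ) :
    deriv (deriv fun s => sin (θ s)) t =
      cos (θ t) * deriv (deriv θ) t - sin (θ t) * deriv θ t ^ 2 := by
  rw [deriv_sin_comp hθ, deriv_fun_mul (hθ t).cos (hθ' t), _root_.deriv_cos (hθ t)]
  ring

theorem deriv_deriv_cos_comp (hθ : Differentiable ℝ θ) (hθ' : Differentiable ℝ (deriv θ))
    (t : ℝ) :
    deriv (deriv fun s => cos (θ s)) t =
      -sin (θ t) * deriv (deriv θ) t - cos (θ t) * deriv θ t ^ 2 := by
  simp only [deriv_cos_comp hθ, neg_mul]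
  rw [deriv.fun_neg, deriv_fun_mul (hθ t).sin (hθ' t), _root_.deriv_sin (hθ t)]
  ring

end Trigonometric

/-- Lie-Bäcklund equivalence for the PVTOL: the transformation
`z¹ = y¹ - ε sin θ`, `z² = y² + ε cos θ`, `v¹ = θ`, `v² = u¹ - ε θ̇²`
maps solutions of the PVTOL equations to solutions of
`z̈¹ = -v² sin v¹`, `z̈² = v² cos v¹ + g`. -/
theorem PVTOL_LieBaecklund_equivalence
    (g ε : ℝ) (y1 y2 θ u1 u2 : ℝ → ℝ)
    (hy1 : Differentiable ℝ y1) (hy1' : Differentiable ℝ (deriv y1))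
    (hy2 : Differentiable ℝ y2) (hy2' : Differentiable ℝ (deriv y2))
    (hθ : Differentiable ℝ θ) (hθ' : Differentiable ℝ (deriv θ))
    (heq1 : ∀ t, deriv (deriv y1) t = -(u1 t) * sin (θ t) + ε * u2 t * cos (θ t))
    (heq2 : ∀ t, deriv (deriv y2) t = u1 t * cos (θ t) + ε * u2 t * sin (θ t) + g)
    (heq3 : ∀ t, deriv (deriv θ) t = u2 t)
    (z1 z2 v1 v2 : ℝ → ℝ)
    (hz1 : z1 = fun t => y1 t - ε * sin (θ t))
    (hz2 : z2 = fun t => y2 t + ε * cos (θ t))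
    (hv1 : v1 = θ)
    (hv2 : v2 = fun t => u1 t - ε * (deriv θ t) ^ 2) :
    (∀ t, deriv (deriv z1) t = -(v2 t) * sin (v1 t)) ∧
    (∀ t, deriv (deriv z2) t = v2 t * cos (v1 t) + g) := by
  subst hz1 hz2 hv1 hv2
  constructor
  · intro t
    rw [deriv_deriv_sub_const_mul ε hy1 hy1' hθ.sin (differentiable_deriv_sin_comp hθ hθ') t,
      deriv_deriv_sin_comp hθ hθ', heq1, heq3]
    ring
  · intro t
    rw [deriv_deriv_add_const_mul ε hy2 hy2' hθ.cos (differentiable_deriv_cos_comp hθ hθ') t,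
      deriv_deriv_cos_comp hθ hθ', heq2, heq3]
    ring
end
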